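/- Let ℓ : ℝ^p → ℝ be continuously differentiable with x ↦ ℓ(x) + (κ/2)‖x‖₂² convex for some κ > 0, let C_1, …, C_m ⊆ ℝ^p be nonempty closed convex sets, suppose f_κ(x) = ℓ(x) + (κ/2) Σ_{i=1}^m dist(x, C_i)² is coercive, and let μ > κ. Let (x_n) be the MM iterates x_{n+1} = argmin_y [ℓ(y) + (μ/2) Σ_{i=1}^m ‖y − P_{C_i}(x_n)‖₂²] for the penalized objective f_μ(x) = ℓ(x) + (μ/2) Σ_{i=1}^m dist(x, C_i)². Then: (i) every cluster point of (x_n) is a stationary point of f_μ (i.e., satisfies ∇f_μ(x) = 0); (ii) if f_μ has only finitely many stationary points, the iterates converge to one of them; and (iii) if f_μ has a unique stationary point, the iterates converge to that point, which is the global minimizer of f_μ. -/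

import Mathlib

/-!
The MM surrogate `y ↦ ℓ(y) + (μ/2) ∑ᵢ ‖y - P_{Cᵢ}(x_n)‖²` majorizes `f_μ` and touches it at
`x_n`; since `ℓ + (κ/2)‖·‖²` is convex it is `(mμ - κ)`-strongly convex, so each step decreases
`f_μ` by at least `(mμ - κ)/4 · ‖x_n - x_{n+1}‖²`. By coercivity the iterates stay in a compact
set and `f_μ` is bounded below, so the steps tend to zero, and passing to the limit in the
first-order condition of the surrogate shows that cluster points are stationary. A sequence in a
compact set with vanishing steps cannot oscillate between finitely many isolated cluster points,
so it converges. Finally a global minimizer of `f_μ`, which exists by coercivity, minimizes its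
own surrogate and is therefore stationary.
-/

open Filter Metric Topology InnerProductSpace
open scoped RealInnerProductSpace

section Sequences

variable {X : Type*}

lemma antitone_of_sufficient_decrease [PseudoMetricSpace X] {f : X → ℝ} {x : ℕ → X} {c : ℝ}
    (hc : 0 ≤ c) (hdec : ∀ n, f (x (n + 1)) + c * dist (x n) (x (n + 1)) ^ 2 ≤ f (x n)) :
    Antitone (f ∘ x) :=
  antitone_nat_of_succ_le fun n => by
    simpa using (le_add_of_nonneg_right (by positivity)).trans (hdec n)

lemma tendsto_dist_succ_of_sufficient_decrease [PseudoMetricSpace X] {f : X → ℝ} {x : ℕ → X}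
    {c : ℝ} (hc : 0 < c) (hdec : ∀ n, f (x (n + 1)) + c * dist (x n) (x (n + 1)) ^ 2 ≤ f (x n))
    (hbdd : BddBelow (Set.range (f ∘ x))) :
    Tendsto (fun n => dist (x n) (x (n + 1))) atTop (𝓝 0) := by
  have hlim := tendsto_atTop_ciInf (antitone_of_sufficient_decrease hc.le hdec) hbdd
  have hgap : Tendsto (fun n => √((f (x n) - f (x (n + 1))) / c)) atTop (𝓝 0) := by
    have := ((hlim.sub (hlim.comp (tendsto_add_atTop_nat 1))).div_const c).sqrt
    simpa using this
  refine squeeze_zero (fun n => dist_nonneg) (fun n => ?_) hgap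
  rw [Real.le_sqrt dist_nonneg (div_nonneg ?_ hc.le), le_div_iff₀ hc] <;>
    nlinarith [hdec n, sq_nonneg (dist (x n) (x (n + 1)))]

lemma eq_of_tendsto_subseq_of_dist_succ [PseudoMetricSpace X] {Y : Type*} [TopologicalSpace Y]
    [T2Space Y] {G : X → X → Y} (hG : Continuous (Function.uncurry G)) {x : ℕ → X} {y : Y}
    (hx : ∀ n, G (x n) (x (n + 1)) = y)
    (hstep : Tendsto (fun n => dist (x n) (x (n + 1))) atTop (𝓝 0))
    {φ : ℕ → ℕ} (hφ : StrictMono φ) {z : X} (hz : Tendsto (x ∘ φ) atTop (𝓝 z)) : G z z = y := by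
  have hz' : Tendsto (fun k => x (φ k + 1)) atTop (𝓝 z) :=
    hz.congr_dist (hstep.comp hφ.tendsto_atTop)
  have hG' := (hG.tendsto (z, z)).comp (hz.prodMk_nhds hz')
  exact tendsto_nhds_unique hG' (by simp [Function.comp_def, hx])

lemma exists_isCompact_forall_mem_of_tendsto_cocompact [TopologicalSpace X] {g : X → ℝ}
    (hg : Tendsto g (cocompact X) atTop) {x : ℕ → X} {t : ℝ} (hx : ∀ n, g (x n) ≤ t) :
    ∃ K, IsCompact K ∧ ∀ n, x n ∈ K := by
  obtain ⟨K, hK, hout⟩ := hasBasis_cocompact.eventually_iff.1 (hg.eventually_gt_atTop t)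
  exact ⟨K, hK, fun n => by_contra fun hn => (hx n).not_gt (hout hn)⟩

lemma eventually_dist_lt_of_frequently [PseudoMetricSpace X] {x : ℕ → X} {S : Set X} {a : X}
    {ε : ℝ} (hsep : ∀ b ∈ S, dist a b < 3 * ε → b = a)
    (hnear : ∀ᶠ n in atTop, ∃ b ∈ S, dist (x n) b < ε)
    (hstep : ∀ᶠ n in atTop, dist (x n) (x (n + 1)) < ε)
    (hfreq : ∃ᶠ n in atTop, dist (x n) a < ε) : ∀ᶠ n in atTop, dist (x n) a < ε := by
  obtain ⟨N, hN⟩ := eventually_atTop.1 (hnear.and hstep)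
  obtain ⟨n₀, hn₀N, hn₀⟩ := frequently_atTop.1 hfreq N
  refine eventually_atTop.2 ⟨n₀, fun n hn => ?_⟩
  induction n, hn using Nat.le_induction with
  | base => exact hn₀
  | succ n hn ih =>
    -- a step shorter than `ε` cannot leave the `ε`-ball around `a` for that of another point of `S`
    obtain ⟨b, hbS, hb⟩ := (hN (n + 1) (by omega)).1
    have hab : dist a b < 3 * ε := by
      linarith [dist_triangle4 a (x n) (x (n + 1)) b, dist_comm a (x n), (hN n (by omega)).2]
    rwa [← hsep b hbS hab]

lemma IsCompact.exists_tendsto_of_finite_mapClusterPt [MetricSpace X] {K S : Set X} {x : ℕ → X}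
    (hK : IsCompact K) (hxK : ∀ n, x n ∈ K)
    (hstep : Tendsto (fun n => dist (x n) (x (n + 1))) atTop (𝓝 0)) (hS : S.Finite)
    (hclus : ∀ z, MapClusterPt z atTop x → z ∈ S) : ∃ a ∈ S, Tendsto x atTop (𝓝 a) := by
  obtain ⟨a, -, ha⟩ :=
    hK.exists_mapClusterPt (f := atTop) (tendsto_principal.2 (Eventually.of_forall hxK))
  refine ⟨a, hclus a ha, ?_⟩
  obtain ⟨r, hr, hball⟩ := Metric.mem_nhds_iff.1
    ((hS.sdiff (t := {a})).isClosed.isOpen_compl.mem_nhds (fun h => h.2 rfl))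
  have hnearS : Tendsto x atTop (𝓝ˢ S) :=
    hK.tendsto_nhdsSet_of_mapClusterPt (Eventually.of_forall hxK) fun z _ hz => hclus z hz
  refine Metric.tendsto_nhds.2 fun ε hε => ?_
  set δ := min ε (r / 3)
  have hδ : 0 < δ := lt_min hε (by positivity)
  have hsep : ∀ b ∈ S, dist a b < 3 * δ → b = a := fun b hb hab => by
    by_contra hne
    exact hball (by rw [mem_ball, dist_comm]; linarith [min_le_right ε (r / 3)]) ⟨hb, hne⟩
  have hnear : ∀ᶠ n in atTop, ∃ b ∈ S, dist (x n) b < δ :=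
    (hnearS.eventually_mem (thickening_mem_nhdsSet S hδ)).mono fun n hn => mem_thickening_iff.1 hn
  have htrap := eventually_dist_lt_of_frequently hsep hnear (hstep.eventually_lt_const hδ)
    (ha.frequently (ball_mem_nhds a hδ))
  exact htrap.mono fun n hn => hn.trans_le (min_le_left _ _)

end Sequences

section StrongConvexity

variable {E : Type*} [NormedAddCommGroup E] [InnerProductSpace ℝ E] {s : Set E} {f : E → ℝ}
  {m : ℝ} {w : E}

lemma StrongConvexOn.add_mul_sq_le_of_isMinOn (hf : StrongConvexOn s m f) (hw : IsMinOn f s w)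
    (hws : w ∈ s) {y : E} (hys : y ∈ s) : f w + m / 4 * ‖y - w‖ ^ 2 ≤ f y := by
  have hmid := hf.2 hys hws (by norm_num : (0 : ℝ) ≤ 1 / 2) (by norm_num : (0 : ℝ) ≤ 1 / 2)
    (by norm_num)
  have hmin : f w ≤ f ((1 / 2 : ℝ) • y + (1 / 2 : ℝ) • w) :=
    hw (hf.1 hys hws (by norm_num) (by norm_num) (by norm_num))
  simp only [smul_eq_mul] at hmid
  linarith

end StrongConvexity

lemma IsLocalMin.hasGradientAt_eq_zero {F : Type*} [NormedAddCommGroup F] [InnerProductSpace ℝ F]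
    [CompleteSpace F] {f : F → ℝ} {a g : F} (h : IsLocalMin f a) (hf : HasGradientAt f g a) :
    g = 0 :=
  (toDual ℝ F).map_eq_zero_iff.1 (h.hasFDerivAt_eq_zero (hasGradientAt_iff_hasFDerivAt.1 hf))

noncomputable section MajorizationMinimization

variable {E : Type*} [NormedAddCommGroup E] {ι : Type*} [Fintype ι]

def IsMetricProjection (C : Set E) (P : E → E) : Prop :=
  ∀ x, P x ∈ C ∧ ∀ z ∈ C, ‖x - P x‖ ≤ ‖x - z‖

def mmSurrogate (L : E → ℝ) (μ : ℝ) (c : ι → E) (y : E) : ℝ :=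
  L y + μ / 2 * ∑ i, ‖y - c i‖ ^ 2

def penalizedObjective (L : E → ℝ) (μ : ℝ) (C : ι → Set E) (y : E) : ℝ :=
  L y + μ / 2 * ∑ i, infDist y (C i) ^ 2

variable {L : E → ℝ} {μ κ : ℝ} {C : ι → Set E} {P : ι → E → E}

lemma IsMetricProjection.infDist_eq {D : Set E} {Q : E → E} (hQ : IsMetricProjection D Q)
    (x : E) : infDist x D = ‖x - Q x‖ := by
  refine le_antisymm ?_ ?_
  · simpa [dist_eq_norm] using infDist_le_dist_of_mem (x := x) (hQ x).1
  · exact (le_infDist ⟨Q x, (hQ x).1⟩).2 fun z hz => by simpa [dist_eq_norm] using (hQ x).2 z hz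

lemma penalizedObjective_le_mmSurrogate (hμ : 0 ≤ μ) {c : ι → E} (hc : ∀ i, c i ∈ C i) (y : E) :
    penalizedObjective L μ C y ≤ mmSurrogate L μ c y := by
  unfold penalizedObjective mmSurrogate
  gcongr with i
  · exact infDist_nonneg
  · simpa [dist_eq_norm] using infDist_le_dist_of_mem (x := y) (hc i)

lemma penalizedObjective_eq_mmSurrogate (hP : ∀ i, IsMetricProjection (C i) (P i)) (x : E) :
    penalizedObjective L μ C x = mmSurrogate L μ (fun i => P i x) x := by
  simp only [penalizedObjective, mmSurrogate, fun i => (hP i).infDist_eq x]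

lemma penalizedObjective_mono (hκμ : κ ≤ μ) :
    penalizedObjective L κ C ≤ penalizedObjective L μ C :=
  fun y => by unfold penalizedObjective; gcongr

lemma continuous_penalizedObjective (hL : Continuous L) : Continuous (penalizedObjective L μ C) :=
  hL.add (continuous_const.mul
    (continuous_finsetSum _ fun i _ => (continuous_infDist_pt (C i)).pow 2))

lemma isMinOn_mmSurrogate_of_isMinOn (hμ : 0 ≤ μ) (hP : ∀ i, IsMetricProjection (C i) (P i))
    {w : E} (hw : IsMinOn (penalizedObjective L μ C) Set.univ w) :
    IsMinOn (mmSurrogate L μ fun i => P i w) Set.univ w := fun y _ => by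
  rw [← penalizedObjective_eq_mmSurrogate hP]
  exact (hw (Set.mem_univ y)).trans (penalizedObjective_le_mmSurrogate hμ (fun i => (hP i w).1) y)

variable [InnerProductSpace ℝ E]

lemma IsMetricProjection.inner_sub_nonpos {D : Set E} {Q : E → E} (hQ : IsMetricProjection D Q)
    (hD : Convex ℝ D) (x : E) {z : E} (hz : z ∈ D) : ⟪x - Q x, z - Q x⟫ ≤ 0 := by
  refine (norm_eq_iInf_iff_real_inner_le_zero hD (hQ x).1).1 ?_ z hz
  have : Nonempty D := ⟨⟨z, hz⟩⟩
  exact le_antisymm (le_ciInf fun w => (hQ x).2 w w.2)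
    (ciInf_le (⟨0, Set.forall_mem_range.2 fun _ => norm_nonneg _⟩ : BddBelow _)
      (⟨Q x, (hQ x).1⟩ : D))

lemma IsMetricProjection.lipschitzWith_one {D : Set E} {Q : E → E} (hQ : IsMetricProjection D Q)
    (hD : Convex ℝ D) : LipschitzWith 1 Q := by
  refine LipschitzWith.of_dist_le_mul fun a b => ?_
  rw [NNReal.coe_one, one_mul, dist_eq_norm, dist_eq_norm]
  have key : ‖Q a - Q b‖ ^ 2 ≤ ⟪a - b, Q a - Q b⟫ := by
    have ha := hQ.inner_sub_nonpos hD a (hQ b).1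
    have hb := hQ.inner_sub_nonpos hD b (hQ a).1
    rw [← real_inner_self_eq_norm_sq]
    simp only [inner_sub_left, inner_sub_right, real_inner_comm] at ha hb ⊢
    linarith
  nlinarith [real_inner_le_norm (a - b) (Q a - Q b), norm_nonneg (Q a - Q b), norm_nonneg (a - b)]

lemma strongConvexOn_mmSurrogate (hL : ConvexOn ℝ Set.univ fun x => L x + κ / 2 * ‖x‖ ^ 2)
    (c : ι → E) : StrongConvexOn Set.univ (Fintype.card ι * μ - κ) (mmSurrogate L μ c) := by
  rw [strongConvexOn_iff_convex]
  -- the quadratic parts cancel, leaving `L + κ/2 ‖·‖²` plus an affine function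
  have haff : ConvexOn ℝ Set.univ fun y : E => μ / 2 * ∑ i, ‖c i‖ ^ 2 + ⟪-μ • ∑ i, c i, y⟫ :=
    (convexOn_const _ convex_univ).add
      ((innerSL ℝ (-μ • ∑ i, c i)).toLinearMap.convexOn convex_univ)
  refine (hL.add haff).congr fun y _ => ?_
  simp only [mmSurrogate, norm_sub_sq_real, Finset.sum_add_distrib, Finset.sum_sub_distrib,
    ← Finset.mul_sum, ← inner_sum, inner_smul_left, Finset.sum_const, Finset.card_univ,
    nsmul_eq_mul]
  simp [real_inner_comm (∑ i, c i) y]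
  ring

lemma penalizedObjective_add_mul_sq_le (hμ : 0 ≤ μ)
    (hL : ConvexOn ℝ Set.univ fun x => L x + κ / 2 * ‖x‖ ^ 2)
    (hP : ∀ i, IsMetricProjection (C i) (P i)) {x x' : E}
    (hx' : IsMinOn (mmSurrogate L μ fun i => P i x) Set.univ x') :
    penalizedObjective L μ C x' + (Fintype.card ι * μ - κ) / 4 * dist x x' ^ 2 ≤
      penalizedObjective L μ C x := by
  rw [penalizedObjective_eq_mmSurrogate hP x, dist_eq_norm]
  calc _ ≤ mmSurrogate L μ (fun i => P i x) x' + (Fintype.card ι * μ - κ) / 4 * ‖x - x'‖ ^ 2 := by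
        gcongr; exact penalizedObjective_le_mmSurrogate hμ (fun i => (hP i x).1) x'
    _ ≤ _ := (strongConvexOn_mmSurrogate hL _).add_mul_sq_le_of_isMinOn hx' trivial trivial

variable [CompleteSpace E]

lemma hasGradientAt_mmSurrogate {g w : E} (hL : HasGradientAt L g w) (c : ι → E) :
    HasGradientAt (mmSurrogate L μ c) (g + μ • ∑ i, (w - c i)) w := by
  rw [hasGradientAt_iff_hasFDerivAt] at hL ⊢
  have hsq : ∀ i, HasFDerivAt (fun y => ‖y - c i‖ ^ 2) (2 • innerSL ℝ (w - c i)) w := fun i => by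
    simpa using ((hasFDerivAt_id w).sub_const (c i)).norm_sq
  have hsum : HasFDerivAt (fun y => ∑ i, ‖y - c i‖ ^ 2) (∑ i, 2 • innerSL ℝ (w - c i)) w :=
    HasFDerivAt.fun_sum fun i _ => hsq i
  refine (hL.add (hsum.const_mul (μ / 2))).congr_fderiv ?_
  ext v
  simp
  rw [← Finset.mul_sum, Finset.sum_sub_distrib, Finset.sum_const, Finset.card_univ, nsmul_eq_mul]
  ring

lemma add_smul_sum_sub_eq_zero_of_isMinOn_mmSurrogate {g w : E} (hL : HasGradientAt L g w)
    {c : ι → E} (hw : IsMinOn (mmSurrogate L μ c) Set.univ w) : g + μ • ∑ i, (w - c i) = 0 :=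
  (hw.isLocalMin univ_mem).hasGradientAt_eq_zero (hasGradientAt_mmSurrogate hL c)

end MajorizationMinimization

theorem mm_iterates_convergence_general (p m : ℕ) (hm : 1 ≤ m)
    (κ : ℝ) (hκ : 0 < κ)
    (L : EuclideanSpace ℝ (Fin p) → ℝ)
    (gL : EuclideanSpace ℝ (Fin p) → EuclideanSpace ℝ (Fin p))
    (hdiff : ∀ x, HasGradientAt L (gL x) x)
    (hcont : Continuous gL)
    (hconv : ConvexOn ℝ Set.univ (fun x => L x + κ / 2 * ‖x‖ ^ 2))
    (C : Fin m → Set (EuclideanSpace ℝ (Fin p)))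
    (hcv : ∀ i, Convex ℝ (C i))
    (P : Fin m → EuclideanSpace ℝ (Fin p) → EuclideanSpace ℝ (Fin p))
    (hP : ∀ i x, P i x ∈ C i ∧ ∀ z ∈ C i, ‖x - P i x‖ ≤ ‖x - z‖)
    (hcoercive : Filter.Tendsto
      (fun x : EuclideanSpace ℝ (Fin p) =>
        L x + κ / 2 * ∑ i, (Metric.infDist x (C i)) ^ 2)
      (Filter.cocompact _) Filter.atTop)
    (μ : ℝ) (hμ : κ < μ)
    (fμ : EuclideanSpace ℝ (Fin p) → ℝ)
    (hfμ : ∀ x, fμ x = L x + μ / 2 * ∑ i, (Metric.infDist x (C i)) ^ 2)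
    -- stationary points of `f_μ`, since `∇f_μ(x) = ∇ℓ(x) + μ ∑ᵢ [x − P_{Cᵢ}(x)]`:
    (Stat : Set (EuclideanSpace ℝ (Fin p)))
    (hStat : Stat = {z | gL z + μ • ∑ i, (z - P i z) = 0})
    (x : ℕ → EuclideanSpace ℝ (Fin p))
    (hiter : ∀ n, ∀ y, L (x (n + 1)) + μ / 2 * ∑ i, ‖x (n + 1) - P i (x n)‖ ^ 2 ≤
                       L y + μ / 2 * ∑ i, ‖y - P i (x n)‖ ^ 2) :
    (∀ z, (∃ φ : ℕ → ℕ, StrictMono φ ∧ Filter.Tendsto (x ∘ φ) Filter.atTop (nhds z)) →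
        z ∈ Stat) ∧
    (Stat.Finite → ∃ z ∈ Stat, Filter.Tendsto x Filter.atTop (nhds z)) ∧
    (∀ z, Stat = {z} →
        Filter.Tendsto x Filter.atTop (nhds z) ∧ ∀ y, fμ z ≤ fμ y) := by
  have hμ0 : 0 ≤ μ := (hκ.trans hμ).le
  have hc : 0 < (m * μ - κ) / 4 := by
    have : (1 : ℝ) ≤ m := by exact_mod_cast hm
    nlinarith
  have hcoer : Tendsto (penalizedObjective L κ C) (cocompact _) atTop := hcoercive
  have hκμ : penalizedObjective L κ C ≤ penalizedObjective L μ C := penalizedObjective_mono hμ.le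
  obtain rfl : fμ = penalizedObjective L μ C := funext hfμ
  have hLc : Continuous L :=
    continuous_iff_continuousAt.2 fun y => (hdiff y).differentiableAt.continuousAt
  have hPc : ∀ i, Continuous (P i) := fun i =>
    (IsMetricProjection.lipschitzWith_one (hP i) (hcv i)).continuous
  obtain ⟨w, hw⟩ := (continuous_penalizedObjective hLc).exists_forall_le
    (tendsto_atTop_mono hκμ hcoer)
  have hmin : ∀ n, IsMinOn (mmSurrogate L μ fun i => P i (x n)) Set.univ (x (n + 1)) := fun n =>
    isMinOn_univ_iff.2 (hiter n)
  have hdec : ∀ n, penalizedObjective L μ C (x (n + 1)) +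
      (m * μ - κ) / 4 * dist (x n) (x (n + 1)) ^ 2 ≤ penalizedObjective L μ C (x n) := fun n => by
    simpa using penalizedObjective_add_mul_sq_le hμ0 hconv hP (hmin n)
  have hstep := tendsto_dist_succ_of_sufficient_decrease hc hdec
    ⟨_, Set.forall_mem_range.2 fun n => hw (x n)⟩
  obtain ⟨K, hK, hxK⟩ := exists_isCompact_forall_mem_of_tendsto_cocompact hcoer fun n =>
    (hκμ (x n)).trans (antitone_of_sufficient_decrease hc.le hdec (Nat.zero_le n))
  have hcluster : ∀ z, (∃ φ : ℕ → ℕ, StrictMono φ ∧ Tendsto (x ∘ φ) atTop (𝓝 z)) → z ∈ Stat := by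
    rintro z ⟨φ, hφ, hz⟩
    rw [hStat]
    exact eq_of_tendsto_subseq_of_dist_succ (G := fun u v => gL v + μ • ∑ i, (v - P i u))
      (by fun_prop) (fun n => add_smul_sum_sub_eq_zero_of_isMinOn_mmSurrogate (hdiff _) (hmin n))
      hstep hφ hz
  have hfinite : Stat.Finite → ∃ z ∈ Stat, Tendsto x atTop (𝓝 z) := fun hS =>
    hK.exists_tendsto_of_finite_mapClusterPt hxK hstep hS fun z hz => hcluster z hz.tendsto_subseq
  refine ⟨hcluster, hfinite, fun z hz => ?_⟩
  obtain ⟨z', hz', hlim⟩ := hfinite (hz ▸ Set.finite_singleton z)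
  have hwS : w ∈ Stat := hStat ▸ add_smul_sum_sub_eq_zero_of_isMinOn_mmSurrogate (hdiff w)
    (isMinOn_mmSurrogate_of_isMinOn hμ0 hP fun y _ => hw y)
  rw [hz, Set.mem_singleton_iff] at hz' hwS
  subst hz' hwS
  exact ⟨hlim, hw⟩

/-- Convergence of the MM iterates for the penalized objective
`f_μ(x) = ℓ(x) + (μ/2) ∑ᵢ dist(x, Cᵢ)²`: (i) every cluster point of the iterates is a
stationary point of `f_μ`; (ii) if `f_μ` has finitely many stationary points, the iterates
converge to one of them; (iii) if `f_μ` has a unique stationary point, the iterates converge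
to it and it is the global minimizer of `f_μ`. -/
theorem mm_iterates_convergence (p m : ℕ) (hm : 1 ≤ m)
    (κ : ℝ) (hκ : 0 < κ)
    (L : EuclideanSpace ℝ (Fin p) → ℝ)
    (gL : EuclideanSpace ℝ (Fin p) → EuclideanSpace ℝ (Fin p))
    (hdiff : ∀ x, HasGradientAt L (gL x) x)
    (hcont : Continuous gL)
    (hconv : ConvexOn ℝ Set.univ (fun x => L x + κ / 2 * ‖x‖ ^ 2))
    (C : Fin m → Set (EuclideanSpace ℝ (Fin p)))
    (hne : ∀ i, (C i).Nonempty) (hcl : ∀ i, IsClosed (C i)) (hcv : ∀ i, Convex ℝ (C i))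
    (P : Fin m → EuclideanSpace ℝ (Fin p) → EuclideanSpace ℝ (Fin p))
    (hP : ∀ i x, P i x ∈ C i ∧ ∀ z ∈ C i, ‖x - P i x‖ ≤ ‖x - z‖)
    (hcoercive : Filter.Tendsto
      (fun x : EuclideanSpace ℝ (Fin p) =>
        L x + κ / 2 * ∑ i, (Metric.infDist x (C i)) ^ 2)
      (Filter.cocompact _) Filter.atTop)
    (μ : ℝ) (hμ : κ < μ)
    (fμ : EuclideanSpace ℝ (Fin p) → ℝ)
    (hfμ : ∀ x, fμ x = L x + μ / 2 * ∑ i, (Metric.infDist x (C i)) ^ 2)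
    -- stationary points of `f_μ`, since `∇f_μ(x) = ∇ℓ(x) + μ ∑ᵢ [x − P_{Cᵢ}(x)]`:
    (Stat : Set (EuclideanSpace ℝ (Fin p)))
    (hStat : Stat = {z | gL z + μ • ∑ i, (z - P i z) = 0})
    (x : ℕ → EuclideanSpace ℝ (Fin p))
    (hiter : ∀ n, ∀ y, L (x (n + 1)) + μ / 2 * ∑ i, ‖x (n + 1) - P i (x n)‖ ^ 2 ≤
                       L y + μ / 2 * ∑ i, ‖y - P i (x n)‖ ^ 2) :
    (∀ z, (∃ φ : ℕ → ℕ, StrictMono φ ∧ Filter.Tendsto (x ∘ φ) Filter.atTop (nhds z)) →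
        z ∈ Stat) ∧
    (Stat.Finite → ∃ z ∈ Stat, Filter.Tendsto x Filter.atTop (nhds z)) ∧
    (∀ z, Stat = {z} →
        Filter.Tendsto x Filter.atTop (nhds z) ∧ ∀ y, fμ z ≤ fμ y) :=
  mm_iterates_convergence_general p m hm κ hκ L gL hdiff hcont hconv C hcv P hP hcoercive μ hμ fμ
    hfμ Stat hStat x hiter
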